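/- For a smooth Lagrangian L(t, q, q') on ℝ × ℝ^n × ℝ^n and a smooth curve γ : ℝ → ℝ^n that is an extremal (i.e., satisfies the Euler–Lagrange equation d/dt (∂L/∂q'(t, γ, γ')) = ∂L/∂q(t, γ, γ')), if v : ℝ → ℝ^n generates a variational symmetry of L in the sense that for all t, (∂L/∂q)·v + (∂L/∂q')·v' = 0 along (t, γ(t), γ'(t)), then the Noether current t ↦ (∂L/∂q')(t, γ(t), γ'(t)) · v(t) is constant. -/

import Mathlib

/-- Noether's theorem for a first-order Lagrangian `L(t, q, q')` on `ℝ × ℝⁿ × ℝⁿ`: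
if `γ` is an extremal and `v` generates a variational symmetry of `L` along `γ`,
then the Noether current `t ↦ (∂L/∂q')(t,γ(t),γ'(t)) · v(t)` is constant. -/
theorem stmt0
    (n : ℕ)
    (L : ℝ → (Fin n → ℝ) → (Fin n → ℝ) → ℝ)
    (hL : ContDiff ℝ (⊤ : ℕ∞) (fun p : ℝ × (Fin n → ℝ) × (Fin n → ℝ) => L p.1 p.2.1 p.2.2))
    (γ v : ℝ → Fin n → ℝ)
    (hγ : ContDiff ℝ (⊤ : ℕ∞) γ) (hv : ContDiff ℝ (⊤ : ℕ∞) v)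
    (γ' v' : ℝ → Fin n → ℝ)
    (hγ' : ∀ t i, γ' t i = deriv (fun τ => γ τ i) t)
    (hv' : ∀ t i, v' t i = deriv (fun τ => v τ i) t)
    (Lq Lp : ℝ → (Fin n → ℝ) → (Fin n → ℝ) → Fin n → ℝ)
    (hLq : ∀ t q p i, Lq t q p i = deriv (fun s => L t (Function.update q i s) p) (q i))
    (hLp : ∀ t q p i, Lp t q p i = deriv (fun s => L t q (Function.update p i s)) (p i))
    -- Euler–Lagrange equations: d/dt (∂L/∂q') = ∂L/∂q along γ
    (hEL : ∀ t i, deriv (fun τ => Lp τ (γ τ) (γ' τ) i) t = Lq t (γ t) (γ' t) i)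
    -- variational symmetry: (∂L/∂q)·v + (∂L/∂q')·v' = 0 along γ
    (hsym : ∀ t, ∑ i, (Lq t (γ t) (γ' t) i * v t i + Lp t (γ t) (γ' t) i * v' t i) = 0) :
    ∀ s t : ℝ, ∑ i, Lp s (γ s) (γ' s) i * v s i = ∑ i, Lp t (γ t) (γ' t) i * v t i := by
  set F : ℝ × (Fin n → ℝ) × (Fin n → ℝ) → ℝ := fun p => L p.1 p.2.1 p.2.2 with hF
  have hL' : ContDiff ℝ (⊤ : ℕ∞) F := hL.of_le (by simp)
  have hFd : Differentiable ℝ F := hL'.differentiable (by simp)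
  -- express Lp via the total derivative of F
  have key : ∀ t q p i, Lp t q p i
      = fderiv ℝ F (t, q, p) (0, 0, Pi.single i 1) := by
    intro t q p i
    rw [hLp]
    have h1 : HasDerivAt (fun s : ℝ => ((t, q, Function.update p i s) :
        ℝ × (Fin n → ℝ) × (Fin n → ℝ))) (0, 0, Pi.single i 1) (p i) :=
      HasDerivAt.prodMk (hasDerivAt_const _ t) (HasDerivAt.prodMk (hasDerivAt_const _ q) (hasDerivAt_update p i (p i)))
    have h2 : HasDerivAt (fun s : ℝ => F (t, q, Function.update p i s))
        (fderiv ℝ F (t, q, Function.update p i (p i)) (0, 0, Pi.single i 1)) (p i) :=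
      (hFd _).hasFDerivAt.comp_hasDerivAt _ h1
    simpa [hF, Function.update_eq_self] using h2.deriv
  -- γ' is smooth
  have hγd : Differentiable ℝ γ := (hγ.of_le (by simp) : ContDiff ℝ (⊤ : ℕ∞) γ).differentiable (by simp)
  have hγ'eq : γ' = deriv γ := by
    funext t i
    rw [hγ' t i]
    have h := ((ContinuousLinearMap.proj (R := ℝ) (φ := fun _ : Fin n => ℝ)
      i).hasFDerivAt.comp_hasDerivAt t (hγd t).hasDerivAt)
    exact h.deriv
  have hγ's : ContDiff ℝ (⊤ : ℕ∞) γ' :=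
    hγ'eq ▸ (contDiff_infty_iff_deriv.mp (hγ.of_le (by simp))).2
  -- the curve t ↦ (t, γ t, γ' t)
  set c : ℝ → ℝ × (Fin n → ℝ) × (Fin n → ℝ) := fun t => (t, γ t, γ' t) with hc
  have hcs : ContDiff ℝ (⊤ : ℕ∞) c :=
    contDiff_id.prodMk ((hγ.of_le (by simp)).prodMk hγ's)
  -- smoothness of t ↦ Lp t (γ t) (γ' t) i
  have hPs : ∀ i : Fin n, ContDiff ℝ (⊤ : ℕ∞) (fun t => Lp t (γ t) (γ' t) i) := by
    intro i
    have h1 : ContDiff ℝ (⊤ : ℕ∞) (fderiv ℝ F) := hL'.fderiv_right (by simp)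
    have : (fun t => Lp t (γ t) (γ' t) i) = fun t => fderiv ℝ F (c t)
        ((0 : ℝ), (0 : Fin n → ℝ), Pi.single i (1:ℝ)) := by
      funext t; exact key t (γ t) (γ' t) i
    rw [this]
    exact (ContinuousLinearMap.apply ℝ ℝ (((0 : ℝ), (0 : Fin n → ℝ), Pi.single i (1:ℝ)) :
      ℝ × (Fin n → ℝ) × (Fin n → ℝ))).contDiff.comp (h1.comp hcs)
  -- the Noether current
  set N : ℝ → ℝ := fun t => ∑ i, Lp t (γ t) (γ' t) i * v t i with hN
  have hvd : Differentiable ℝ v := (hv.of_le (by simp) : ContDiff ℝ (⊤ : ℕ∞) v).differentiable (by simp)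
  have hvi : ∀ (t : ℝ) (i : Fin n), HasDerivAt (fun τ => v τ i) (v' t i) t := by
    intro t i
    have h := ((ContinuousLinearMap.proj (R := ℝ) (φ := fun _ : Fin n => ℝ)
      i).hasFDerivAt.comp_hasDerivAt t (hvd t).hasDerivAt)
    have h' : HasDerivAt (fun τ => v τ i) (deriv v t i) t := h
    rw [hv' t i, h'.deriv]; exact h' 
  have hNder : ∀ t, HasDerivAt N 0 t := by
    intro t
    have h : HasDerivAt N (∑ i, (Lq t (γ t) (γ' t) i * v t i
        + Lp t (γ t) (γ' t) i * v' t i)) t := by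
      apply HasDerivAt.fun_sum
      intro i _
      have hP : HasDerivAt (fun τ => Lp τ (γ τ) (γ' τ) i) (Lq t (γ t) (γ' t) i) t := by
        rw [← hEL t i]
        exact (((hPs i).differentiable (by simp)) t).hasDerivAt
      exact hP.mul (hvi t i)
    rw [hsym t] at h
    exact h
  intro s t
  exact is_const_of_deriv_eq_zero (fun x => (hNder x).differentiableAt)
    (fun x => (hNder x).deriv) s t
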